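/- arXiv:2004.10846 — 5 statements merged into one kernel-verified Lean document; each statement's English description precedes it below -/
import Mathlib

section
/- For every G₂ student of true potential z ≥ 1, the displacement μ̂₂(z) − μ(z) equals (1−p)·z^{−α}·(β^{−α} − 1) if z ≥ 1/β, and equals (1−p)·(1 − z^{−α}) if 1 ≤ z ≤ 1/β. Consequently the displacement is nonnegative for all z ≥ 1, its supremum over z ≥ 1 equals (1−p)(1 − β^α), and this maximum is attained exactly at z = 1/β. -/
open Set

/-- Unbiased school assignment of a student of true potential `z`. -/
noncomputable def mu (α z : ℝ) : ℝ := z ^ (-α)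

/-- Biased school assignment of a G₂ student of true potential `z`. -/
noncomputable def muHat2 (α β p z : ℝ) : ℝ :=
  (1 - p) * min 1 ((β * z) ^ (-α)) + p * z ^ (-α)

/-- Displacement of G₂ students: explicit formula, nonnegativity, and the
maximum displacement `(1-p)(1-β^α)` is attained exactly at `z = 1/β`. -/
theorem g2_displacement (α β p : ℝ) (hα : 0 < α) (hβ : β ∈ Ioo (0:ℝ) 1)
    (hp : p ∈ Ioo (0:ℝ) 1) :
    (∀ z : ℝ, 1 ≤ z → 1 / β ≤ z →
        muHat2 α β p z - mu α z = (1 - p) * z ^ (-α) * (β ^ (-α) - 1)) ∧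
    (∀ z : ℝ, 1 ≤ z → z ≤ 1 / β →
        muHat2 α β p z - mu α z = (1 - p) * (1 - z ^ (-α))) ∧
    (∀ z : ℝ, 1 ≤ z → 0 ≤ muHat2 α β p z - mu α z) ∧
    IsGreatest ((fun z => muHat2 α β p z - mu α z) '' Ici (1:ℝ))
      ((1 - p) * (1 - β ^ α)) ∧
    (∀ z : ℝ, 1 ≤ z →
        muHat2 α β p z - mu α z = (1 - p) * (1 - β ^ α) → z = 1 / β) := by
  obtain ⟨hβ0, hβ1⟩ := hβ
  obtain ⟨hp0, hp1⟩ := hp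
  have hβinv : (1:ℝ) < 1 / β := by
    rw [lt_div_iff₀ hβ0]; linarith
  have h1p : (0:ℝ) < 1 - p := by linarith
  -- formula on z ≥ 1/β
  have hA : ∀ z : ℝ, 1 ≤ z → 1 / β ≤ z →
      muHat2 α β p z - mu α z = (1 - p) * z ^ (-α) * (β ^ (-α) - 1) := by
    intro z hz1 hz2
    have hz0 : (0:ℝ) < z := by linarith
    have hβz : (1:ℝ) ≤ β * z := by
      rw [div_le_iff₀ hβ0] at hz2; linarith [hz2]
    have hmin : min 1 ((β * z) ^ (-α)) = (β * z) ^ (-α) := by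
      exact min_eq_right (Real.rpow_le_one_of_one_le_of_nonpos hβz (by linarith))
    have hmul : (β * z) ^ (-α) = β ^ (-α) * z ^ (-α) :=
      Real.mul_rpow hβ0.le hz0.le
    simp only [muHat2, mu]
    rw [hmin, hmul]
    ring
  -- formula on z ≤ 1/β
  have hB : ∀ z : ℝ, 1 ≤ z → z ≤ 1 / β →
      muHat2 α β p z - mu α z = (1 - p) * (1 - z ^ (-α)) := by
    intro z hz1 hz2
    have hβz : β * z ≤ 1 := by
      rw [le_div_iff₀ hβ0] at hz2; linarith [hz2]
    have hβz0 : 0 < β * z := by positivity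
    have hmin : min 1 ((β * z) ^ (-α)) = 1 :=
      min_eq_left (Real.one_le_rpow_of_pos_of_le_one_of_nonpos hβz0 hβz (by linarith))
    simp only [muHat2, mu, hmin]
    ring
  have hβα : (1/β) ^ (-α) = β ^ α := by
    rw [one_div, Real.inv_rpow hβ0.le, ← Real.rpow_neg hβ0.le, neg_neg]
  have hval : muHat2 α β p (1/β) - mu α (1/β) = (1 - p) * (1 - β ^ α) := by
    rw [hB (1/β) hβinv.le le_rfl, hβα]
  -- nonnegativity
  have hC : ∀ z : ℝ, 1 ≤ z → 0 ≤ muHat2 α β p z - mu α z := by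
    intro z hz1
    rcases le_total z (1/β) with h | h
    · rw [hB z hz1 h]
      have : z ^ (-α) ≤ 1 := Real.rpow_le_one_of_one_le_of_nonpos hz1 (by linarith)
      nlinarith
    · rw [hA z hz1 h]
      have hz0 : (0:ℝ) < z := by linarith
      have h1 : (1:ℝ) ≤ β ^ (-α) :=
        Real.one_le_rpow_of_pos_of_le_one_of_nonpos hβ0 hβ1.le (by linarith)
      have h2 : (0:ℝ) ≤ z ^ (-α) := (Real.rpow_pos_of_pos hz0 _).le
      exact mul_nonneg (mul_nonneg h1p.le h2) (by linarith)
  -- upper bound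
  have hub : ∀ z : ℝ, 1 ≤ z → muHat2 α β p z - mu α z ≤ (1 - p) * (1 - β ^ α) := by
    intro z hz1
    rcases le_total z (1/β) with h | h
    · rw [hB z hz1 h]
      have : (1/β) ^ (-α) ≤ z ^ (-α) :=
        Real.rpow_le_rpow_of_nonpos (by linarith) h (by linarith)
      rw [hβα] at this
      nlinarith
    · rw [hA z hz1 h]
      have hz : z ^ (-α) ≤ (1/β) ^ (-α) :=
        Real.rpow_le_rpow_of_nonpos (by linarith) h (by linarith)
      rw [hβα] at hz
      have h1 : (1:ℝ) ≤ β ^ (-α) :=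
        Real.one_le_rpow_of_pos_of_le_one_of_nonpos hβ0 hβ1.le (by linarith)
      have hβα1 : β ^ α * β ^ (-α) = 1 := by
        rw [← Real.rpow_add hβ0]; simp
      have hz0 : (0:ℝ) < z := by linarith
      have h3 : z ^ (-α) * (β ^ (-α) - 1) ≤ β ^ α * (β ^ (-α) - 1) :=
        mul_le_mul_of_nonneg_right hz (by linarith)
      have h4 := mul_le_mul_of_nonneg_left h3 h1p.le
      nlinarith [h4]
  refine ⟨hA, hB, hC, ⟨⟨1/β, hβinv.le, hval⟩, ?_⟩, ?_⟩
  · rintro y ⟨z, hz, rfl⟩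
    exact hub z hz
  · intro z hz1 heq
    by_contra hne
    rcases lt_or_gt_of_ne hne with h | h
    · rw [hB z hz1 h.le] at heq
      have : (1/β) ^ (-α) < z ^ (-α) :=
        Real.rpow_lt_rpow_of_neg (by linarith) h (by linarith)
      rw [hβα] at this
      nlinarith
    · rw [hA z hz1 h.le] at heq
      have hz : z ^ (-α) < (1/β) ^ (-α) :=
        Real.rpow_lt_rpow_of_neg (by linarith) h (by linarith)
      rw [hβα] at hz
      have h1 : (1:ℝ) < β ^ (-α) := by
        have := Real.rpow_lt_rpow_of_neg hβ0 hβ1 (by linarith : -α < 0)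
        simpa using this
      have hβα1 : β ^ α * β ^ (-α) = 1 := by
        rw [← Real.rpow_add hβ0]; simp
      have hz0 : (0:ℝ) < z := by linarith
      have h3 : z ^ (-α) * (β ^ (-α) - 1) < β ^ α * (β ^ (-α) - 1) :=
        mul_lt_mul_of_pos_right hz (by linarith)
      have h4 := mul_lt_mul_of_pos_left h3 h1p
      nlinarith [h4]
end

section
/- Assume α > 1. For every d ≥ 1, the conditional expectation of the true potential given that the perceived potential is at least d satisfies E[Z | Ẑ ≥ d] = (α/(α−1))·d·((1−p) + p·β^{α−1})/((1−p) + p·β^α). In particular, since β ∈ (0,1), this strictly exceeds (α/(α−1))·d = E[Z | Z ≥ d], the corresponding average in the unbiased setting. -/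
open Set MeasureTheory Filter Topology ProbabilityTheory

/-! For a Pareto variable, `P(Z ≥ c) = c^{-α}` and, by the layer-cake formula,
`E[Z; Z ≥ c] = α/(α-1) · c^{1-α}` for every `c ≥ 1`. In group `G₂` the event `Ẑ ≥ d` is
`Z ≥ d/β`, so by independence of `Z` and `B` the event `{Ẑ ≥ d}` contributes
`d^{-α}((1-p) + pβ^α)` of mass and `α/(α-1) · d^{1-α}((1-p) + pβ^{α-1})` of integral.
Raising the threshold to `d/β` shrinks the mass by `β^α` but the integral only by `β^{α-1}`,
which is larger since `β < 1`. -/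

def HasParetoTail {Ω : Type*} [MeasurableSpace Ω] (μ : Measure Ω) (Z : Ω → ℝ) (α : ℝ) : Prop :=
  ∀ t : ℝ, 1 ≤ t → μ {ω | t < Z ω} = ENNReal.ofReal (t ^ (-α))

namespace HasParetoTail

variable {Ω : Type*} [MeasurableSpace Ω] {μ : Measure Ω} [IsProbabilityMeasure μ]
  {Z : Ω → ℝ} {α c : ℝ}

theorem measure_setOf_le (hZ : HasParetoTail μ Z α) (hc : 1 ≤ c) :
    μ {ω | c ≤ Z ω} = ENNReal.ofReal (c ^ (-α)) := by
  refine le_antisymm ?_ (hZ c hc ▸ measure_mono fun ω (hω : c < Z ω) => hω.le)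
  rcases hc.eq_or_lt with rfl | hc
  · simpa using prob_le_one
  have hbound : ∀ᶠ t in 𝓝[<] c, μ {ω | c ≤ Z ω} ≤ ENNReal.ofReal (t ^ (-α)) := by
    filter_upwards [Ioo_mem_nhdsLT hc] with t ht
    rw [← hZ t ht.1.le]
    exact measure_mono fun ω (hω : c ≤ Z ω) => ht.2.trans_le hω
  have hcont : Tendsto (fun t => ENNReal.ofReal (t ^ (-α))) (𝓝[<] c)
      (𝓝 (ENNReal.ofReal (c ^ (-α)))) :=
    ((ENNReal.continuous_ofReal.tendsto _).comp
      (Real.continuousAt_rpow_const c (-α) (Or.inl (by positivity))).tendsto).mono_left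
      nhdsWithin_le_nhds
  exact ge_of_tendsto hcont hbound

theorem measureReal_setOf_le (hZ : HasParetoTail μ Z α) (hc : 1 ≤ c) :
    μ.real {ω | c ≤ Z ω} = c ^ (-α) := by
  rw [measureReal_def, hZ.measure_setOf_le hc, ENNReal.toReal_ofReal (by positivity)]

theorem measure_setOf_lt_inter_setOf_le (hZ : HasParetoTail μ Z α) (hc : 1 ≤ c) (t : ℝ) :
    μ ({ω | t < Z ω} ∩ {ω | c ≤ Z ω}) = ENNReal.ofReal (max t c ^ (-α)) := by
  rcases lt_or_ge t c with h | h
  · have hsub : {ω | c ≤ Z ω} ⊆ {ω | t < Z ω} := fun ω hω => h.trans_le hω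
    rw [max_eq_right h.le, inter_eq_right.2 hsub, hZ.measure_setOf_le hc]
  · have hsub : {ω | t < Z ω} ⊆ {ω | c ≤ Z ω} := fun ω hω => (h.trans_lt hω).le
    rw [max_eq_left h, inter_eq_left.2 hsub, hZ t (hc.trans h)]

theorem lintegral_setOf_le (hZ : HasParetoTail μ Z α) (hZm : Measurable Z) (hα : 1 < α)
    (hc : 1 ≤ c) :
    ∫⁻ ω in {ω | c ≤ Z ω}, ENNReal.ofReal (Z ω) ∂μ
      = ENNReal.ofReal (α / (α - 1) * c ^ (1 - α)) := by
  have hc0 : 0 < c := one_pos.trans_le hc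
  have hα1 : 0 < α - 1 := by linarith
  have hnn : 0 ≤ᵐ[μ.restrict {ω | c ≤ Z ω}] Z := by
    filter_upwards [ae_restrict_mem (measurableSet_le measurable_const hZm)] with ω hω
    exact hc0.le.trans hω
  have hlayer (t : ℝ) :
      μ.restrict {ω | c ≤ Z ω} {ω | t < Z ω} = ENNReal.ofReal (max t c ^ (-α)) := by
    rw [Measure.restrict_apply (measurableSet_lt measurable_const hZm),
      hZ.measure_setOf_lt_inter_setOf_le hc]
  have hbelow : ∫⁻ t in Ioc 0 c, ENNReal.ofReal (max t c ^ (-α))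
      = ENNReal.ofReal (c ^ (1 - α)) := by
    rw [setLIntegral_congr_fun measurableSet_Ioc fun t ht => by rw [max_eq_right ht.2],
      setLIntegral_const, Real.volume_Ioc, sub_zero, ← ENNReal.ofReal_mul (by positivity),
      ← Real.rpow_add_one hc0.ne', neg_add_eq_sub]
  have habove : ∫⁻ t in Ioi c, ENNReal.ofReal (max t c ^ (-α))
      = ENNReal.ofReal (c ^ (1 - α) / (α - 1)) := by
    have hα' : -α < -1 := by linarith
    rw [setLIntegral_congr_fun measurableSet_Ioi fun t ht => by rw [max_eq_left ht.le],
      ← ofReal_integral_eq_lintegral_ofReal (integrableOn_Ioi_rpow_of_lt hα' hc0)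
        (ae_restrict_of_forall_mem measurableSet_Ioi fun t ht =>
          Real.rpow_nonneg (hc0.trans ht).le _),
      integral_Ioi_rpow_of_lt hα' hc0, neg_add_eq_sub, ← neg_div_neg_eq, neg_neg, neg_sub]
  rw [lintegral_eq_lintegral_meas_lt _ hnn hZm.aemeasurable, funext hlayer,
    ← Ioc_union_Ioi_eq_Ioi hc0.le, lintegral_union measurableSet_Ioi (Ioc_disjoint_Ioi le_rfl),
    hbelow, habove, ← ENNReal.ofReal_add (by positivity) (by positivity)]
  congr 1
  field_simp
  ring

theorem integrableOn_setOf_le (hZ : HasParetoTail μ Z α) (hZm : Measurable Z) (hα : 1 < α)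
    (hc : 1 ≤ c) : IntegrableOn Z {ω | c ≤ Z ω} μ := by
  refine ⟨hZm.aestronglyMeasurable, ?_⟩
  rw [hasFiniteIntegral_iff_ofReal, hZ.lintegral_setOf_le hZm hα hc]
  · exact ENNReal.ofReal_lt_top
  · filter_upwards [ae_restrict_mem (measurableSet_le measurable_const hZm)] with ω hω
    exact zero_le_one.trans (hc.trans hω)

theorem setIntegral_setOf_le (hZ : HasParetoTail μ Z α) (hZm : Measurable Z) (hα : 1 < α)
    (hc : 1 ≤ c) : ∫ ω in {ω | c ≤ Z ω}, Z ω ∂μ = α / (α - 1) * c ^ (1 - α) := by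
  have hα1 : 0 < α - 1 := by linarith
  rw [integral_eq_lintegral_of_nonneg_ae _ hZm.aestronglyMeasurable,
    hZ.lintegral_setOf_le hZm hα hc, ENNReal.toReal_ofReal (by positivity)]
  filter_upwards [ae_restrict_mem (measurableSet_le measurable_const hZm)] with ω hω
  exact zero_le_one.trans (hc.trans hω)

end HasParetoTail

theorem ProbabilityTheory.IndepFun.setIntegral_preimage_inter_preimage {Ω γ : Type*}
    [MeasurableSpace Ω] [MeasurableSpace γ] {μ : Measure Ω} {Z : Ω → ℝ} {B : Ω → γ}
    (hind : IndepFun Z B μ) (hZm : Measurable Z) (hBm : Measurable B) {s : Set γ}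
    (hs : MeasurableSet s) {T : Set ℝ} (hT : MeasurableSet T) :
    ∫ ω in B ⁻¹' s ∩ Z ⁻¹' T, Z ω ∂μ = μ.real (B ⁻¹' s) * ∫ ω in Z ⁻¹' T, Z ω ∂μ := by
  have h := Indep.setIntegral_eq_mul hBm.comap_le hind.symm hZm.aemeasurable ⟨s, hs, rfl⟩
    (measurable_id.indicator hT).aestronglyMeasurable
  simp only [← indicator_comp_right] at h
  rwa [setIntegral_indicator (hZm hT), integral_indicator (hZm hT)] at h

theorem setOf_le_ite_eq {Ω : Type*} {Z B : Ω → ℝ} {β d : ℝ} (hβ : 0 < β) :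
    {ω | d ≤ if B ω = 1 then β * Z ω else Z ω}
      = B ⁻¹' {1} ∩ {ω | d / β ≤ Z ω} ∪ B ⁻¹' {1}ᶜ ∩ {ω | d ≤ Z ω} := by
  ext ω
  by_cases hb : B ω = 1 <;> simp [hb, div_le_iff₀ hβ, mul_comm]

section Perceived

variable {Ω : Type*} [MeasurableSpace Ω] {μ : Measure Ω} [IsProbabilityMeasure μ]
  {Z B : Ω → ℝ} {α β d : ℝ}

theorem measureReal_setOf_le_ite (hZ : HasParetoTail μ Z α) (hZm : Measurable Z)
    (hBm : Measurable B) (hind : IndepFun Z B μ) (hβ : β ∈ Ioc 0 1) (hd : 1 ≤ d) :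
    μ.real {ω | d ≤ if B ω = 1 then β * Z ω else Z ω}
      = d ^ (-α) * ((1 - μ.real (B ⁻¹' {1})) + μ.real (B ⁻¹' {1}) * β ^ α) := by
  have hdβ : 1 ≤ d / β := (one_le_div hβ.1).2 (hβ.2.trans hd)
  have hinter (s : Set ℝ) (hs : MeasurableSet s) (c : ℝ) :
      μ.real (B ⁻¹' s ∩ {ω | c ≤ Z ω}) = μ.real (B ⁻¹' s) * μ.real {ω | c ≤ Z ω} := by
    have h : μ ({ω | c ≤ Z ω} ∩ B ⁻¹' s) = μ {ω | c ≤ Z ω} * μ (B ⁻¹' s) :=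
      hind.measure_inter_preimage_eq_mul _ _ measurableSet_Ici hs
    rw [inter_comm, measureReal_def, h, ENNReal.toReal_mul, mul_comm, measureReal_def,
      measureReal_def]
  have hpow : (d / β) ^ (-α) = d ^ (-α) * β ^ α := by
    rw [Real.div_rpow (by linarith) hβ.1.le, Real.rpow_neg hβ.1.le, div_inv_eq_mul]
  rw [setOf_le_ite_eq hβ.1, measureReal_union (disjoint_compl_right.preimage B |>.mono
      inter_subset_left inter_subset_left) ((hBm (measurableSet_singleton 1).compl).inter
      (measurableSet_le measurable_const hZm)),
    hinter _ (measurableSet_singleton 1), hinter _ (measurableSet_singleton 1).compl,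
    preimage_compl, probReal_compl_eq_one_sub (hBm (measurableSet_singleton 1)),
    hZ.measureReal_setOf_le hdβ, hZ.measureReal_setOf_le hd, hpow]
  ring

theorem setIntegral_setOf_le_ite (hZ : HasParetoTail μ Z α) (hZm : Measurable Z)
    (hBm : Measurable B) (hind : IndepFun Z B μ) (hα : 1 < α) (hβ : β ∈ Ioc 0 1) (hd : 1 ≤ d) :
    ∫ ω in {ω | d ≤ if B ω = 1 then β * Z ω else Z ω}, Z ω ∂μ
      = α / (α - 1) * d ^ (1 - α)
        * ((1 - μ.real (B ⁻¹' {1})) + μ.real (B ⁻¹' {1}) * β ^ (α - 1)) := by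
  have hdβ : 1 ≤ d / β := (one_le_div hβ.1).2 (hβ.2.trans hd)
  have hsplit (s : Set ℝ) (hs : MeasurableSet s) (c : ℝ) :
      ∫ ω in B ⁻¹' s ∩ {ω | c ≤ Z ω}, Z ω ∂μ = μ.real (B ⁻¹' s) * ∫ ω in {ω | c ≤ Z ω}, Z ω ∂μ :=
    hind.setIntegral_preimage_inter_preimage hZm hBm hs measurableSet_Ici
  have hpow : (d / β) ^ (1 - α) = d ^ (1 - α) * β ^ (α - 1) := by
    rw [Real.div_rpow (by linarith) hβ.1.le, ← neg_sub, Real.rpow_neg hβ.1.le, div_inv_eq_mul]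
  rw [setOf_le_ite_eq hβ.1, setIntegral_union (disjoint_compl_right.preimage B |>.mono
      inter_subset_left inter_subset_left) ((hBm (measurableSet_singleton 1).compl).inter
      (measurableSet_le measurable_const hZm))
      ((hZ.integrableOn_setOf_le hZm hα hdβ).mono_set inter_subset_right)
      ((hZ.integrableOn_setOf_le hZm hα hd).mono_set inter_subset_right),
    hsplit _ (measurableSet_singleton 1), hsplit _ (measurableSet_singleton 1).compl,
    preimage_compl, probReal_compl_eq_one_sub (hBm (measurableSet_singleton 1)),
    hZ.setIntegral_setOf_le hZm hα hdβ, hZ.setIntegral_setOf_le hZm hα hd, hpow]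
  ring

end Perceived

theorem conditional_expectation_given_perceived_general
    {Ω : Type*} [MeasurableSpace Ω] (μ : Measure Ω) [IsProbabilityMeasure μ]
    (α β p : ℝ) (hα : 1 < α) (hβ : β ∈ Ioo (0:ℝ) 1) (hp : p ∈ Ioo (0:ℝ) 1)
    (Z B : Ω → ℝ) (hZmeas : Measurable Z) (hBmeas : Measurable B)
    (hZ : ∀ t : ℝ, 1 ≤ t → μ {ω | t < Z ω} = ENNReal.ofReal (t ^ (-α)))
    (hBp : μ {ω | B ω = 1} = ENNReal.ofReal p)
    (hind : ProbabilityTheory.IndepFun Z B μ)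
    (Zhat : Ω → ℝ) (hZhat : ∀ ω, Zhat ω = if B ω = 1 then β * Z ω else Z ω)
    (d : ℝ) (hd : 1 ≤ d) :
    (∫ ω in {ω | d ≤ Zhat ω}, Z ω ∂μ) / (μ {ω | d ≤ Zhat ω}).toReal
      = (α / (α - 1)) * d * ((1 - p) + p * β ^ (α - 1)) / ((1 - p) + p * β ^ α) ∧
    (∫ ω in {ω | d ≤ Z ω}, Z ω ∂μ) / (μ {ω | d ≤ Z ω}).toReal
      = (α / (α - 1)) * d ∧
    (α / (α - 1)) * d
      < (∫ ω in {ω | d ≤ Zhat ω}, Z ω ∂μ) / (μ {ω | d ≤ Zhat ω}).toReal := by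
  have hPareto : HasParetoTail μ Z α := hZ
  obtain ⟨hβ0, hβ1⟩ := hβ
  obtain ⟨hp0, hp1⟩ := hp
  have hα1 : 0 < α - 1 := by linarith
  have hd0 : 0 < d := one_pos.trans_le hd
  have hq : μ.real (B ⁻¹' {1}) = p := by
    change (μ {ω | B ω = 1}).toReal = p
    rw [hBp, ENNReal.toReal_ofReal hp0.le]
  have hdpow : d ^ (1 - α) = d * d ^ (-α) := by
    rw [← neg_add_eq_sub, Real.rpow_add_one hd0.ne', mul_comm]
  obtain rfl : Zhat = fun ω => if B ω = 1 then β * Z ω else Z ω := funext hZhat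
  have hβ' : β ∈ Ioc 0 1 := ⟨hβ0, hβ1.le⟩
  have hgain : (1 - p) + p * β ^ α < (1 - p) + p * β ^ (α - 1) := by
    gcongr
    exact Real.rpow_lt_rpow_of_exponent_gt hβ0 hβ1 (by linarith)
  have hden : 0 < (1 - p) + p * β ^ α := by have := Real.rpow_pos_of_pos hβ0 α; nlinarith
  have hperceived : (∫ ω in {ω | d ≤ if B ω = 1 then β * Z ω else Z ω}, Z ω ∂μ)
      / (μ {ω | d ≤ if B ω = 1 then β * Z ω else Z ω}).toReal
      = (α / (α - 1)) * d * ((1 - p) + p * β ^ (α - 1)) / ((1 - p) + p * β ^ α) := by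
    rw [← measureReal_def, measureReal_setOf_le_ite hPareto hZmeas hBmeas hind hβ' hd,
      setIntegral_setOf_le_ite hPareto hZmeas hBmeas hind hα hβ' hd, hq, hdpow]
    field_simp
  refine ⟨hperceived, ?_, ?_⟩
  · rw [← measureReal_def, hPareto.measureReal_setOf_le hd,
      hPareto.setIntegral_setOf_le hZmeas hα hd, hdpow]
    field_simp
  · rw [hperceived, mul_div_assoc]
    exact lt_mul_of_one_lt_right (by positivity) ((one_lt_div hden).2 hgain)

/-- Conditional expectation of the true potential given perceived potential at
least `d`: it equals `(α/(α-1))·d·((1-p)+pβ^{α-1})/((1-p)+pβ^α)`, which strictly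
exceeds the unbiased conditional average `E[Z | Z ≥ d] = (α/(α-1))·d`. -/
theorem conditional_expectation_given_perceived
    {Ω : Type*} [MeasurableSpace Ω] (μ : Measure Ω) [IsProbabilityMeasure μ]
    (α β p : ℝ) (hα : 1 < α) (hβ : β ∈ Ioo (0:ℝ) 1) (hp : p ∈ Ioo (0:ℝ) 1)
    (Z B : Ω → ℝ) (hZmeas : Measurable Z) (hBmeas : Measurable B)
    (hZ : ∀ t : ℝ, 1 ≤ t → μ {ω | t < Z ω} = ENNReal.ofReal (t ^ (-α)))
    (hB01 : ∀ ω, B ω = 0 ∨ B ω = 1)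
    (hBp : μ {ω | B ω = 1} = ENNReal.ofReal p)
    (hind : ProbabilityTheory.IndepFun Z B μ)
    (Zhat : Ω → ℝ) (hZhat : ∀ ω, Zhat ω = if B ω = 1 then β * Z ω else Z ω)
    (d : ℝ) (hd : 1 ≤ d) :
    (∫ ω in {ω | d ≤ Zhat ω}, Z ω ∂μ) / (μ {ω | d ≤ Zhat ω}).toReal
      = (α / (α - 1)) * d * ((1 - p) + p * β ^ (α - 1)) / ((1 - p) + p * β ^ α) ∧
    (∫ ω in {ω | d ≤ Z ω}, Z ω ∂μ) / (μ {ω | d ≤ Z ω}).toReal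
      = (α / (α - 1)) * d ∧
    (α / (α - 1)) * d
      < (∫ ω in {ω | d ≤ Zhat ω}, Z ω ∂μ) / (μ {ω | d ≤ Zhat ω}).toReal :=
  conditional_expectation_given_perceived_general μ α β p hα hβ hp Z B hZmeas hBmeas hZ hBp hind
    Zhat hZhat d hd
end

section
/- For every t ≥ 1, the conditional probability that a student whose perceived potential is at least t belongs to group G₂ equals P(B = 1 | Ẑ ≥ t) = p·β^α/(1−p+p·β^α); in particular this value does not depend on t and is strictly smaller than the unconditional population fraction p. -/
/-!
Both events `{B = 1, Ẑ ≥ t}` and `{Ẑ ≥ t}` split along `B` into events `{B ∈ S, Z ≥ s}`,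
which factor by independence. The Pareto tail `P(Z ≥ s) = s^{-α}` turns the threshold `t/β` met
by `G₂` into the factor `β^α t^{-α}`, so the common factor `t^{-α}` cancels from the ratio,
leaving `pβ^α/(1 - p + pβ^α)`, which is `< p` because `β^α < 1`.
-/

open Set MeasureTheory ProbabilityTheory Filter Topology

theorem Real.div_rpow_neg {x y : ℝ} (hx : 0 ≤ x) (hy : 0 ≤ y) (z : ℝ) :
    (x / y) ^ (-z) = y ^ z * x ^ (-z) := by
  rw [Real.div_rpow hx hy, Real.rpow_neg hy, div_inv_eq_mul, mul_comm]

theorem setOf_le_ite_mul_eq {Ω : Type*} {β t : ℝ} (hβ : 0 < β) {B Z Zhat : Ω → ℝ}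
    (hZhat : ∀ ω, Zhat ω = if B ω = 1 then β * Z ω else Z ω) :
    {ω | t ≤ Zhat ω} = {ω | B ω = 1} ∩ {ω | t / β ≤ Z ω} ∪ {ω | B ω = 1}ᶜ ∩ {ω | t ≤ Z ω} := by
  ext ω
  by_cases h : B ω = 1 <;> simp [hZhat, h, div_le_iff₀ hβ, mul_comm]

theorem mul_div_one_sub_add_mul_lt_self {p x : ℝ} (hp : p ∈ Ioo (0 : ℝ) 1)
    (hx : x ∈ Ioo (0 : ℝ) 1) : p * x / (1 - p + p * x) < p := by
  obtain ⟨hp0, hp1⟩ := hp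
  obtain ⟨hx0, hx1⟩ := hx
  rw [div_lt_iff₀ (by nlinarith)]
  nlinarith [mul_pos (mul_pos hp0 (sub_pos.mpr hp1)) (sub_pos.mpr hx1)]

section

variable {Ω : Type*} [MeasurableSpace Ω] {μ : Measure Ω} {Z : Ω → ℝ}

theorem tendsto_measure_setOf_lt_nhdsLT [IsFiniteMeasure μ] (hZ : Measurable Z) (s : ℝ) :
    Tendsto (fun t => μ {ω | t < Z ω}) (𝓝[<] s) (𝓝 (μ {ω | s ≤ Z ω})) := by
  -- `t ↑ s` in `ℝ` is `t ↓ s` in `ℝᵒᵈ`, along which the sets `{t < Z}` decrease to `{s ≤ Z}`.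
  have key := tendsto_measure_biInter_gt (μ := μ) (ι := ℝᵒᵈ) (a := OrderDual.toDual s)
    (s := fun r => {ω | OrderDual.ofDual r < Z ω})
    (fun r _ => (measurableSet_lt measurable_const hZ).nullMeasurableSet)
    (fun i j _ hij ω hω => lt_of_le_of_lt (OrderDual.ofDual_le_ofDual.mpr hij) hω)
    ⟨OrderDual.toDual (s - 1), OrderDual.toDual_lt_toDual.mpr (by linarith), measure_ne_top _ _⟩
  have hinter : (⋂ r > OrderDual.toDual s, {ω | OrderDual.ofDual r < Z ω}) = {ω | s ≤ Z ω} := by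
    ext ω
    simp only [mem_iInter, mem_ofPred_eq, OrderDual.forall, OrderDual.ofDual_toDual, gt_iff_lt,
      OrderDual.toDual_lt_toDual]
    exact ⟨fun h => le_of_forall_lt fun t ht => h t ht, fun h t ht => ht.trans_le h⟩
  exact hinter ▸ key

theorem measureReal_setOf_le_eq_rpow [IsProbabilityMeasure μ] {α : ℝ} (hZmeas : Measurable Z)
    (hZ : ∀ t : ℝ, 1 ≤ t → μ {ω | t < Z ω} = ENNReal.ofReal (t ^ (-α))) {s : ℝ} (hs : 1 ≤ s) :
    μ.real {ω | s ≤ Z ω} = s ^ (-α) := by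
  suffices μ {ω | s ≤ Z ω} = ENNReal.ofReal (s ^ (-α)) by
    rw [measureReal_def, this, ENNReal.toReal_ofReal (by positivity)]
  rcases hs.eq_or_lt with rfl | hs
  · refine le_antisymm (by simpa using prob_le_one) ?_
    calc ENNReal.ofReal (1 ^ (-α)) = μ {ω | 1 < Z ω} := (hZ 1 le_rfl).symm
      _ ≤ μ {ω | 1 ≤ Z ω} := measure_mono fun ω (hω : 1 < Z ω) => hω.le
  · refine tendsto_nhds_unique (tendsto_measure_setOf_lt_nhdsLT hZmeas s) ?_
    have hcont : ContinuousAt (fun t : ℝ => ENNReal.ofReal (t ^ (-α))) s :=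
      ENNReal.continuous_ofReal.continuousAt.comp
        (Real.continuousAt_rpow_const s (-α) (Or.inl (by linarith)))
    refine (hcont.tendsto.mono_left nhdsWithin_le_nhds).congr' ?_
    filter_upwards [Ioo_mem_nhdsLT hs] with t ht using (hZ t ht.1.le).symm

variable {B : Ω → ℝ}

theorem ProbabilityTheory.IndepFun.measureReal_preimage_inter_setOf_le (hind : IndepFun Z B μ)
    {S : Set ℝ} (hS : MeasurableSet S) (s : ℝ) :
    μ.real (B ⁻¹' S ∩ {ω | s ≤ Z ω}) = μ.real (B ⁻¹' S) * μ.real {ω | s ≤ Z ω} := by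
  simp only [measureReal_def, ← ENNReal.toReal_mul]
  exact congrArg _ (hind.symm.measure_inter_preimage_eq_mul S (Ici s) hS measurableSet_Ici)

variable {β : ℝ} {Zhat : Ω → ℝ}

theorem measureReal_inter_setOf_le_ite_mul (hβ : 0 < β) (hind : IndepFun Z B μ)
    (hZhat : ∀ ω, Zhat ω = if B ω = 1 then β * Z ω else Z ω) (t : ℝ) :
    μ.real ({ω | B ω = 1} ∩ {ω | t ≤ Zhat ω})
      = μ.real {ω | B ω = 1} * μ.real {ω | t / β ≤ Z ω} := by
  rw [setOf_le_ite_mul_eq hβ hZhat, inter_union_distrib_left, ← inter_assoc, inter_self,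
    ← inter_assoc, inter_compl_self, empty_inter, union_empty]
  exact hind.measureReal_preimage_inter_setOf_le (measurableSet_singleton 1) _

theorem measureReal_setOf_le_ite_mul [IsProbabilityMeasure μ] (hβ : 0 < β)
    (hZmeas : Measurable Z) (hBmeas : Measurable B) (hind : IndepFun Z B μ)
    (hZhat : ∀ ω, Zhat ω = if B ω = 1 then β * Z ω else Z ω) (t : ℝ) :
    μ.real {ω | t ≤ Zhat ω} = μ.real {ω | B ω = 1} * μ.real {ω | t / β ≤ Z ω}
      + (1 - μ.real {ω | B ω = 1}) * μ.real {ω | t ≤ Z ω} := by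
  have hB1 : MeasurableSet {ω | B ω = 1} := hBmeas (measurableSet_singleton 1)
  have hdisj : Disjoint ({ω | B ω = 1} ∩ {ω | t / β ≤ Z ω}) ({ω | B ω = 1}ᶜ ∩ {ω | t ≤ Z ω}) :=
    disjoint_compl_right.mono inter_subset_left inter_subset_left
  rw [setOf_le_ite_mul_eq hβ hZhat,
    measureReal_union hdisj (hB1.compl.inter (measurableSet_le measurable_const hZmeas)),
    ← probReal_compl_eq_one_sub hB1]
  congr 1
  · exact hind.measureReal_preimage_inter_setOf_le (measurableSet_singleton 1) _
  · exact hind.measureReal_preimage_inter_setOf_le (measurableSet_singleton 1).compl _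

end

theorem conditional_probability_G2_given_perceived_general
    {Ω : Type*} [MeasurableSpace Ω] (μ : Measure Ω) [IsProbabilityMeasure μ]
    (α β p : ℝ) (hα : 0 < α) (hβ : β ∈ Ioo (0:ℝ) 1) (hp : p ∈ Ioo (0:ℝ) 1)
    (Z B : Ω → ℝ) (hZmeas : Measurable Z) (hBmeas : Measurable B)
    (hZ : ∀ t : ℝ, 1 ≤ t → μ {ω | t < Z ω} = ENNReal.ofReal (t ^ (-α)))
    (hBp : μ {ω | B ω = 1} = ENNReal.ofReal p)
    (hind : ProbabilityTheory.IndepFun Z B μ)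
    (Zhat : Ω → ℝ) (hZhat : ∀ ω, Zhat ω = if B ω = 1 then β * Z ω else Z ω) :
    (∀ t : ℝ, 1 ≤ t →
      (μ ({ω | B ω = 1} ∩ {ω | t ≤ Zhat ω})).toReal / (μ {ω | t ≤ Zhat ω}).toReal
        = p * β ^ α / (1 - p + p * β ^ α)) ∧
    p * β ^ α / (1 - p + p * β ^ α) < p := by
  obtain ⟨hβ0, hβ1⟩ := hβ
  have hβα : β ^ α ∈ Ioo (0 : ℝ) 1 := ⟨Real.rpow_pos_of_pos hβ0 α, Real.rpow_lt_one hβ0.le hβ1 hα⟩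
  refine ⟨fun t ht => ?_, mul_div_one_sub_add_mul_lt_self hp hβα⟩
  have hB : μ.real {ω | B ω = 1} = p := by
    rw [measureReal_def, hBp, ENNReal.toReal_ofReal hp.1.le]
  have hZt : μ.real {ω | t ≤ Z ω} = t ^ (-α) := measureReal_setOf_le_eq_rpow hZmeas hZ ht
  have hZtβ : μ.real {ω | t / β ≤ Z ω} = β ^ α * t ^ (-α) := by
    rw [measureReal_setOf_le_eq_rpow hZmeas hZ ((le_div_iff₀ hβ0).2 (by nlinarith)),
      Real.div_rpow_neg (by linarith) hβ0.le]
  have htα : 0 < t ^ (-α) := Real.rpow_pos_of_pos (by linarith) _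
  rw [← measureReal_def, ← measureReal_def, measureReal_inter_setOf_le_ite_mul hβ0 hind hZhat,
    measureReal_setOf_le_ite_mul hβ0 hZmeas hBmeas hind hZhat, hB, hZt, hZtβ]
  field_simp
  ring

/-- The conditional probability that a student with perceived potential at least
`t` belongs to group G₂ equals `pβ^α/(1-p+pβ^α)` for every `t ≥ 1`; in
particular it does not depend on `t` and is strictly smaller than `p`. -/
theorem conditional_probability_G2_given_perceived
    {Ω : Type*} [MeasurableSpace Ω] (μ : Measure Ω) [IsProbabilityMeasure μ]
    (α β p : ℝ) (hα : 0 < α) (hβ : β ∈ Ioo (0:ℝ) 1) (hp : p ∈ Ioo (0:ℝ) 1)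
    (Z B : Ω → ℝ) (hZmeas : Measurable Z) (hBmeas : Measurable B)
    (hZ : ∀ t : ℝ, 1 ≤ t → μ {ω | t < Z ω} = ENNReal.ofReal (t ^ (-α)))
    (hB01 : ∀ ω, B ω = 0 ∨ B ω = 1)
    (hBp : μ {ω | B ω = 1} = ENNReal.ofReal p)
    (hind : ProbabilityTheory.IndepFun Z B μ)
    (Zhat : Ω → ℝ) (hZhat : ∀ ω, Zhat ω = if B ω = 1 then β * Z ω else Z ω) :
    (∀ t : ℝ, 1 ≤ t →
      (μ ({ω | B ω = 1} ∩ {ω | t ≤ Zhat ω})).toReal / (μ {ω | t ≤ Zhat ω}).toReal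
        = p * β ^ α / (1 - p + p * β ^ α)) ∧
    p * β ^ α / (1 - p + p * β ^ α) < p :=
  conditional_probability_G2_given_perceived_general μ α β p hα hβ hp Z B hZmeas hBmeas hZ hBp hind
    Zhat hZhat
end

section
/- Assume p < 1 − β^α and 0 < ĉ < 1, and let c₀ = (1−p)(1−β^α)/((1−p)+(1−β^α)). If ĉ ≥ c₀ and Z₁* = (((1−p) + (β^{−α}−1)·ĉ)/(β^{−α}−p))^{−1/α}, Z₂* = ((1−p)(1−ĉ)/(β^{−α}−p))^{−1/α}, then β·Z₁* ≤ 1 ≤ β·Z₂* and β·Z₂* ≥ Z₁*. If ĉ ≤ c₀ and Z₁* = ((1−p−ĉ)·β^α/(1−p) + ĉ)^{−1/α}, Z₂* = ((1−p−ĉ)·β^α/(1−p))^{−1/α}, then β·Z₁* ≤ 1 ≤ β·Z₂* and β·Z₂* ≤ Z₁*. -/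
/-!
Write `b = β ^ α ∈ (0, 1)`. Since `β * z ^ (-1 / α) = (z / b) ^ (-1 / α)` and `z ↦ z ^ (-1 / α)`
is antitone on `(0, ∞)`, each inequality between `1`, `Zᵢ*` and `β Zᵢ*` is an inequality between
the tails `Zᵢ* ^ (-α)` and `b`, hence a polynomial inequality in `b`, `p`, `ĉ`. Among these, the
comparison of `β Z₂*` with `Z₁*` is, after clearing denominators, exactly `ĉ ≥ c₀` (resp.
`ĉ ≤ c₀`); the others need only `p b ≤ c₀ < 1 - p`.
-/

open Set

namespace Real

variable {α β x y : ℝ}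

theorem mul_rpow_neg_one_div (hα : α ≠ 0) (hβ : 0 ≤ β) (hx : 0 ≤ x) :
    β * x ^ (-1 / α) = (x / β ^ α) ^ (-1 / α) := by
  rw [div_rpow hx (rpow_nonneg hβ α), ← rpow_mul hβ, mul_div_cancel₀ _ hα, rpow_neg_one,
    div_inv_eq_mul, mul_comm]

theorem rpow_neg_one_div_le_mul_rpow_neg_one_div_iff (hα : 0 < α) (hβ : 0 < β) (hx : 0 < x)
    (hy : 0 < y) : x ^ (-1 / α) ≤ β * y ^ (-1 / α) ↔ y ≤ β ^ α * x := by
  rw [mul_rpow_neg_one_div hα.ne' hβ.le hy.le,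
    rpow_le_rpow_iff_of_neg hx (div_pos hy (rpow_pos_of_pos hβ α))
      (div_neg_of_neg_of_pos neg_one_lt_zero hα),
    div_le_iff₀' (rpow_pos_of_pos hβ α)]

theorem mul_rpow_neg_one_div_le_rpow_neg_one_div_iff (hα : 0 < α) (hβ : 0 < β) (hx : 0 < x)
    (hy : 0 < y) : β * y ^ (-1 / α) ≤ x ^ (-1 / α) ↔ β ^ α * x ≤ y := by
  rw [mul_rpow_neg_one_div hα.ne' hβ.le hy.le,
    rpow_le_rpow_iff_of_neg (div_pos hy (rpow_pos_of_pos hβ α)) hx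
      (div_neg_of_neg_of_pos neg_one_lt_zero hα),
    le_div_iff₀' (rpow_pos_of_pos hβ α)]

theorem one_le_mul_rpow_neg_one_div_iff (hα : 0 < α) (hβ : 0 < β) (hy : 0 < y) :
    1 ≤ β * y ^ (-1 / α) ↔ y ≤ β ^ α := by
  simpa using rpow_neg_one_div_le_mul_rpow_neg_one_div_iff hα hβ one_pos hy

theorem mul_rpow_neg_one_div_le_one_iff (hα : 0 < α) (hβ : 0 < β) (hy : 0 < y) :
    β * y ^ (-1 / α) ≤ 1 ↔ β ^ α ≤ y := by
  simpa using mul_rpow_neg_one_div_le_rpow_neg_one_div_iff hα hβ one_pos hy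

end Real

/-- The threshold `c₀`, in terms of `b = β ^ α`. -/
noncomputable def criticalVoucherMass (p b : ℝ) : ℝ := (1 - p) * (1 - b) / ((1 - p) + (1 - b))

section

variable {b p c : ℝ}

theorem criticalVoucherMass_le_iff (hp : p < 1) (hb : b < 1) :
    criticalVoucherMass p b ≤ c ↔ (1 - p) * (1 - b) ≤ c * ((1 - p) + (1 - b)) :=
  div_le_iff₀ (by linarith)

theorem le_criticalVoucherMass_iff (hp : p < 1) (hb : b < 1) :
    c ≤ criticalVoucherMass p b ↔ c * ((1 - p) + (1 - b)) ≤ (1 - p) * (1 - b) :=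
  le_div_iff₀ (by linarith)

theorem mul_le_criticalVoucherMass (hp : 0 ≤ p) (hb : 0 ≤ b) (hpb : p < 1 - b) :
    p * b ≤ criticalVoucherMass p b := by
  rw [criticalVoucherMass, le_div_iff₀ (by linarith)]
  -- `(1 - p)(1 - b) - p b ((1 - p) + (1 - b)) = (1 - p - b)(1 - p b)`
  nlinarith [mul_nonneg (sub_nonneg.2 hpb.le) (by nlinarith : 0 ≤ 1 - p * b)]

theorem criticalVoucherMass_lt (hp : p < 1) (hb : b < 1) : criticalVoucherMass p b < 1 - p := by
  rw [criticalVoucherMass, div_lt_iff₀ (by linarith)]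
  nlinarith [mul_pos (sub_pos.2 hp) (sub_pos.2 hp)]

theorem endpoint_tails_of_criticalVoucherMass_le (hb0 : 0 < b) (hb1 : b < 1) (hp : 0 ≤ p)
    (hpb : p < 1 - b) (hc1 : c < 1) (hc : criticalVoucherMass p b ≤ c) :
    0 < (1 - p) * (1 - c) / (b⁻¹ - p) ∧
      b ≤ ((1 - p) + (b⁻¹ - 1) * c) / (b⁻¹ - p) ∧
      (1 - p) * (1 - c) / (b⁻¹ - p) ≤ b ∧
      (1 - p) * (1 - c) / (b⁻¹ - p) ≤ b * (((1 - p) + (b⁻¹ - 1) * c) / (b⁻¹ - p)) := by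
  have hB : 1 < b⁻¹ := (one_lt_inv₀ hb0).2 hb1
  have hbB : b * b⁻¹ = 1 := mul_inv_cancel₀ hb0.ne'
  have hD : 0 < b⁻¹ - p := by linarith
  have hpbc : p * b ≤ c := (mul_le_criticalVoucherMass hp hb0.le hpb).trans hc
  have hc' := (criticalVoucherMass_le_iff (by linarith) hb1).1 hc
  refine ⟨div_pos (by nlinarith) hD, ?_, ?_, ?_⟩
  · rw [le_div_iff₀ hD]
    nlinarith [mul_le_mul_of_nonneg_right hpbc (sub_nonneg.2 hB.le)]
  · rw [div_le_iff₀ hD]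
    nlinarith [mul_nonneg hp hb0.le, mul_nonneg hp (sub_nonneg.2 hc1.le)]
  · rw [← mul_div_assoc, div_le_div_iff_of_pos_right hD]
    nlinarith

theorem endpoint_tails_of_le_criticalVoucherMass (hb0 : 0 < b) (hb1 : b < 1) (hpb : p < 1 - b)
    (hc0 : 0 ≤ c) (hc : c ≤ criticalVoucherMass p b) :
    0 < (1 - p - c) * b / (1 - p) ∧
      b ≤ (1 - p - c) * b / (1 - p) + c ∧
      (1 - p - c) * b / (1 - p) ≤ b ∧
      b * ((1 - p - c) * b / (1 - p) + c) ≤ (1 - p - c) * b / (1 - p) := by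
  have hq : 0 < 1 - p := by linarith
  have hcq : c < 1 - p := hc.trans_lt (criticalVoucherMass_lt (by linarith) hb1)
  have hc' := (le_criticalVoucherMass_iff (by linarith) hb1).1 hc
  refine ⟨by have := sub_pos.2 hcq; positivity, ?_, ?_, ?_⟩
  · rw [div_add' _ _ _ hq.ne', le_div_iff₀ hq]
    nlinarith [mul_nonneg hc0 (sub_nonneg.2 hpb.le)]
  · rw [div_le_iff₀ hq]
    nlinarith
  · rw [div_add' _ _ _ hq.ne', mul_div_assoc', div_le_div_iff_of_pos_right hq]
    nlinarith

end

/-- The optimal voucher interval `[Z₁*, Z₂*]` straddles `1/β`; moreover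
`[βZ₁*, βZ₂*]` and `[Z₁*, Z₂*]` overlap exactly when `ĉ ≥ c₀`. -/
theorem optimal_interval_straddles (α β p c : ℝ) (hα : 0 < α)
    (hβ : β ∈ Ioo (0:ℝ) 1) (hp : p ∈ Ioo (0:ℝ) 1)
    (hpβ : p < 1 - β ^ α) (hc0 : 0 < c) (hc1 : c < 1) :
    ((1 - p) * (1 - β ^ α) / ((1 - p) + (1 - β ^ α)) ≤ c →
      β * ((((1 - p) + (β ^ (-α) - 1) * c) / (β ^ (-α) - p)) ^ (-1 / α)) ≤ 1 ∧
      1 ≤ β * (((1 - p) * (1 - c) / (β ^ (-α) - p)) ^ (-1 / α)) ∧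
      (((1 - p) + (β ^ (-α) - 1) * c) / (β ^ (-α) - p)) ^ (-1 / α)
        ≤ β * (((1 - p) * (1 - c) / (β ^ (-α) - p)) ^ (-1 / α))) ∧
    (c ≤ (1 - p) * (1 - β ^ α) / ((1 - p) + (1 - β ^ α)) →
      β * (((1 - p - c) * β ^ α / (1 - p) + c) ^ (-1 / α)) ≤ 1 ∧
      1 ≤ β * (((1 - p - c) * β ^ α / (1 - p)) ^ (-1 / α)) ∧
      β * (((1 - p - c) * β ^ α / (1 - p)) ^ (-1 / α))
        ≤ ((1 - p - c) * β ^ α / (1 - p) + c) ^ (-1 / α)) := by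
  obtain ⟨hβ0, hβ1⟩ := hβ
  have hb0 : 0 < β ^ α := Real.rpow_pos_of_pos hβ0 α
  have hb1 : β ^ α < 1 := Real.rpow_lt_one hβ0.le hβ1 hα
  rw [Real.rpow_neg hβ0.le]
  constructor
  · intro hc
    obtain ⟨hZ₂, hbZ₁, hZ₂b, hZ₂bZ₁⟩ :=
      endpoint_tails_of_criticalVoucherMass_le hb0 hb1 hp.1.le hpβ hc1 hc
    have hZ₁ := hb0.trans_le hbZ₁
    exact ⟨(Real.mul_rpow_neg_one_div_le_one_iff hα hβ0 hZ₁).2 hbZ₁,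
      (Real.one_le_mul_rpow_neg_one_div_iff hα hβ0 hZ₂).2 hZ₂b,
      (Real.rpow_neg_one_div_le_mul_rpow_neg_one_div_iff hα hβ0 hZ₁ hZ₂).2 hZ₂bZ₁⟩
  · intro hc
    obtain ⟨hZ₂, hbZ₁, hZ₂b, hbZ₁Z₂⟩ :=
      endpoint_tails_of_le_criticalVoucherMass hb0 hb1 hpβ hc0.le hc
    have hZ₁ := hb0.trans_le hbZ₁
    exact ⟨(Real.mul_rpow_neg_one_div_le_one_iff hα hβ0 hZ₁).2 hbZ₁,
      (Real.one_le_mul_rpow_neg_one_div_iff hα hβ0 hZ₂).2 hZ₂b,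
      (Real.mul_rpow_neg_one_div_le_rpow_neg_one_div_iff hα hβ0 hZ₁ hZ₂).2 hbZ₁Z₂⟩
end

section
/- The average mistreatment of G₂ students under the status quo satisfies ∫_1^∞ (μ̂₂(z) − z^{−α})·α·z^{−α−1} dz = (1−p)(1−β^α)/2. -/
open Set MeasureTheory

/-!
The mistreatment factors as `(1 - p) * (F̄(β z) - z^(-α))`. Against the Pareto density
`α z^(-α-1)`, the term `z^(-α)` gives half the Pareto(`2α`) density and integrates to `1/2`.
The term `F̄(β z)` equals `1` up to `z = β⁻¹`, contributing `1 - β^α`, and `β^(-α) z^(-α)` beyond,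
contributing `β^(-α) (β⁻¹)^(-2α) / 2 = β^α / 2`.
-/

noncomputable def paretoDensity (s z : ℝ) : ℝ :=
  s * z ^ (-s - 1)

section ParetoDensity

variable {s c : ℝ}

lemma integrableOn_Ioi_paretoDensity (hs : 0 < s) (hc : 0 < c) :
    IntegrableOn (paretoDensity s) (Ioi c) :=
  (integrableOn_Ioi_rpow_of_lt (by linarith) hc).const_mul s

lemma integral_Ioi_paretoDensity (hs : 0 < s) (hc : 0 < c) :
    ∫ z in Ioi c, paretoDensity s z = c ^ (-s) := by
  simp only [paretoDensity]
  rw [integral_const_mul, integral_Ioi_rpow_of_lt (by linarith) hc, sub_add_cancel]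
  field_simp

lemma integral_Ioc_paretoDensity {a b : ℝ} (hs : 0 < s) (ha : 0 < a) (hab : a ≤ b) :
    ∫ z in Ioc a b, paretoDensity s z = a ^ (-s) - b ^ (-s) := by
  have hsplit := setIntegral_union (Ioc_disjoint_Ioi le_rfl) measurableSet_Ioi
    ((integrableOn_Ioi_paretoDensity hs ha).mono_set Ioc_subset_Ioi_self)
    (integrableOn_Ioi_paretoDensity hs (ha.trans_le hab))
  rw [Ioc_union_Ioi_eq_Ioi hab, integral_Ioi_paretoDensity hs ha,
    integral_Ioi_paretoDensity hs (ha.trans_le hab)] at hsplit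
  linarith

lemma rpow_neg_mul_paretoDensity {z : ℝ} (hz : 0 < z) :
    z ^ (-s) * paretoDensity s z = paretoDensity (2 * s) z / 2 := by
  simp only [paretoDensity]
  rw [← mul_assoc, mul_comm (z ^ (-s)), mul_assoc, ← Real.rpow_add hz]
  ring_nf

lemma integral_Ioi_rpow_neg_mul_paretoDensity (hs : 0 < s) (hc : 0 < c) :
    ∫ z in Ioi c, z ^ (-s) * paretoDensity s z = c ^ (-(2 * s)) / 2 := by
  rw [setIntegral_congr_fun measurableSet_Ioi
      fun z hz => rpow_neg_mul_paretoDensity (s := s) (hc.trans hz),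
    integral_div, integral_Ioi_paretoDensity (by positivity) hc]

lemma integrableOn_Ioi_rpow_neg_mul_paretoDensity (hs : 0 < s) (hc : 0 < c) :
    IntegrableOn (fun z => z ^ (-s) * paretoDensity s z) (Ioi c) :=
  IntegrableOn.congr_fun ((integrableOn_Ioi_paretoDensity (by positivity) hc).div_const 2)
    (fun z hz => (rpow_neg_mul_paretoDensity (hc.trans hz)).symm) measurableSet_Ioi

end ParetoDensity

section BiasedTail

variable {α β : ℝ}

lemma integrableOn_Ioi_min_one_rpow_mul_paretoDensity (hα : 0 < α) (hβ : 0 ≤ β) :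
    IntegrableOn (fun z => min 1 ((β * z) ^ (-α)) * paretoDensity α z) (Ioi 1) := by
  refine (integrableOn_Ioi_paretoDensity hα one_pos).mono' ?_ ?_
  · exact (Measurable.mul (by fun_prop) (by unfold paretoDensity; fun_prop)).aestronglyMeasurable
  · filter_upwards [self_mem_ae_restrict measurableSet_Ioi] with z hz
    have hz0 : (0 : ℝ) < z := zero_lt_one.trans hz
    have hdens : 0 ≤ paretoDensity α z := by unfold paretoDensity; positivity
    have hF : 0 ≤ min 1 ((β * z) ^ (-α)) := le_min zero_le_one (by positivity)
    rw [norm_mul, Real.norm_of_nonneg hdens, Real.norm_of_nonneg hF]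
    exact mul_le_of_le_one_left hdens (min_le_left _ _)

lemma integral_Ioi_min_one_rpow_mul_paretoDensity (hα : 0 < α) (hβ₀ : 0 < β)
    (hβ₁ : β ≤ 1) :
    ∫ z in Ioi 1, min 1 ((β * z) ^ (-α)) * paretoDensity α z = 1 - β ^ α / 2 := by
  have hc : 1 ≤ β⁻¹ := one_le_inv_iff₀.2 ⟨hβ₀, hβ₁⟩
  have hcα : β⁻¹ ^ (-α) = β ^ α := by
    rw [Real.inv_rpow hβ₀.le, Real.rpow_neg hβ₀.le, inv_inv]
  have hint := integrableOn_Ioi_min_one_rpow_mul_paretoDensity (β := β) hα hβ₀.le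
  have hnear : ∀ z ∈ Ioc 1 β⁻¹,
      min 1 ((β * z) ^ (-α)) * paretoDensity α z = paretoDensity α z := by
    intro z hz
    have hβz : β * z ≤ 1 := (le_inv_mul_iff₀ hβ₀).1 (by simpa using hz.2)
    have hβz₀ : 0 < β * z := mul_pos hβ₀ (zero_lt_one.trans hz.1)
    rw [min_eq_left (Real.one_le_rpow_of_pos_of_le_one_of_nonpos hβz₀ hβz (by linarith)), one_mul]
  have hfar : ∀ z ∈ Ioi β⁻¹, min 1 ((β * z) ^ (-α)) * paretoDensity α z =
      β ^ (-α) * (z ^ (-α) * paretoDensity α z) := by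
    intro z hz
    have hz0 : 0 < z := (inv_pos.2 hβ₀).trans hz
    have hβz : 1 ≤ β * z := (inv_le_iff_one_le_mul₀' hβ₀).1 (le_of_lt hz)
    rw [min_eq_right (Real.rpow_le_one_of_one_le_of_nonpos hβz (by linarith)),
      Real.mul_rpow hβ₀.le hz0.le, mul_assoc]
  rw [← Ioc_union_Ioi_eq_Ioi hc, setIntegral_union (Ioc_disjoint_Ioi le_rfl) measurableSet_Ioi
      (hint.mono_set Ioc_subset_Ioi_self) (hint.mono_set (Ioi_subset_Ioi hc)),
    setIntegral_congr_fun measurableSet_Ioc hnear, setIntegral_congr_fun measurableSet_Ioi hfar,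
    integral_const_mul, integral_Ioc_paretoDensity hα one_pos hc,
    integral_Ioi_rpow_neg_mul_paretoDensity hα (by positivity), Real.one_rpow,
    show -(2 * α) = -α + -α by ring, Real.rpow_add (by positivity), hcα, Real.rpow_neg hβ₀.le]
  field_simp
  ring

end BiasedTail

theorem average_mistreatment_status_quo_general (α β p : ℝ) (hα : 0 < α)
    (hβ : β ∈ Ioo (0:ℝ) 1) :
    ∫ z in Ioi (1:ℝ), (muHat2 α β p z - z ^ (-α)) * (α * z ^ (-α - 1))
      = (1 - p) * (1 - β ^ α) / 2 := by
  obtain ⟨hβ₀, hβ₁⟩ := hβ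
  have hmistreatment : ∀ z, (muHat2 α β p z - z ^ (-α)) * (α * z ^ (-α - 1)) =
      (1 - p) * (min 1 ((β * z) ^ (-α)) * paretoDensity α z - z ^ (-α) * paretoDensity α z) := by
    intro z
    simp only [muHat2, paretoDensity]
    ring
  simp only [hmistreatment]
  rw [integral_const_mul,
    integral_sub (integrableOn_Ioi_min_one_rpow_mul_paretoDensity hα hβ₀.le)
      (integrableOn_Ioi_rpow_neg_mul_paretoDensity hα one_pos),
    integral_Ioi_min_one_rpow_mul_paretoDensity hα hβ₀ hβ₁.le,
    integral_Ioi_rpow_neg_mul_paretoDensity hα one_pos, Real.one_rpow]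
  ring

/-- The average mistreatment of G₂ students under the status quo equals
`(1-p)(1-β^α)/2`. -/
theorem average_mistreatment_status_quo (α β p : ℝ) (hα : 0 < α)
    (hβ : β ∈ Ioo (0:ℝ) 1) (hp : p ∈ Ioo (0:ℝ) 1) :
    ∫ z in Ioi (1:ℝ), (muHat2 α β p z - z ^ (-α)) * (α * z ^ (-α - 1))
      = (1 - p) * (1 - β ^ α) / 2 :=
  average_mistreatment_status_quo_general α β p hα hβ
end
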